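/- arXiv:1704.02436 — 2 statements merged into one kernel-verified Lean document; each statement's English description precedes it below -/
import Mathlib

section
/- For a closed curve of length L, sweep-covered by mobile sensors of speed v with sweep period t, the deployment of n = ⌈L/(vt)⌉ sensors at positions x_k = k·v·t (mod L) for k = 0,…,n−1, all moving in the same direction at speed v, guarantees coverage: for every point x ∈ [0,L) and every time t₀ ≥ 0 there exist k ∈ {0,…,n−1} and a time s ∈ [t₀, t₀+t] such that (k·v·t + v·s) mod L = x. -/
/-!
Unroll the circle: the point `x` has a unique lift `y` in the window `[v t₀, v t₀ + L)` swept by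
sensor `0` during a time of length `L / v`. The sensors are staggered by `v t` along the curve, so
the `k`-th one with `k = ⌊(y - v t₀) / (v t)⌋` reaches `y` within time `t` after `t₀`, and
`k < ⌈L / (v t)⌉` because `y - v t₀ < L`.
-/

noncomputable def rmod (x L : ℝ) : ℝ := x - L * ⌊x / L⌋

lemma rmod_eq_toIcoMod {L : ℝ} (hL : 0 < L) (x : ℝ) : rmod x L = toIcoMod hL 0 x := by
  rw [toIcoMod_eq_fract_mul, Int.fract, rmod]
  field_simp

lemma rmod_toIcoMod {L : ℝ} (hL : 0 < L) (a x : ℝ) : rmod (toIcoMod hL a x) L = rmod x L := by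
  rw [rmod_eq_toIcoMod hL, rmod_eq_toIcoMod hL, toIcoMod_toIcoMod]

lemma rmod_eq_self {x L : ℝ} (hx : x ∈ Set.Ico 0 L) : rmod x L = x := by
  have hL : 0 < L := hx.1.trans_lt hx.2
  rw [rmod_eq_toIcoMod hL, toIcoMod_eq_self, zero_add]
  exact hx

lemma exists_lt_natCeil_div_mul_le {d w L : ℝ} (hd : 0 < d) (hw : w ∈ Set.Ico 0 L) :
    ∃ k < ⌈L / d⌉₊, k * d ≤ w ∧ w < k * d + d := by
  refine ⟨⌊w / d⌋₊, Nat.floor_lt_ceil_of_lt_of_pos ?_ ?_, ?_, ?_⟩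
  · exact div_lt_div_of_pos_right hw.2 hd
  · exact div_pos (hw.1.trans_lt hw.2) hd
  · exact (le_div_iff₀ hd).mp (Nat.floor_le (div_nonneg hw.1 hd.le))
  · have := Nat.lt_floor_add_one (w / d)
    rw [div_lt_iff₀ hd] at this
    linarith

lemma exists_sensor_reaches {L v t t₀ y : ℝ} (hv : 0 < v) (ht : 0 < t)
    (hy : y ∈ Set.Ico (v * t₀) (v * t₀ + L)) :
    ∃ k < ⌈L / (v * t)⌉₊, ∃ s ∈ Set.Icc t₀ (t₀ + t), (k : ℝ) * v * t + v * s = y := by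
  have hw : y - v * t₀ ∈ Set.Ico 0 L := ⟨by linarith [hy.1], by linarith [hy.2]⟩
  obtain ⟨k, hk, hlo, hhi⟩ := exists_lt_natCeil_div_mul_le (mul_pos hv ht) hw
  refine ⟨k, hk, t₀ + (y - v * t₀ - k * (v * t)) / v, ⟨?_, ?_⟩, ?_⟩
  · have : 0 ≤ (y - v * t₀ - k * (v * t)) / v := div_nonneg (by linarith) hv.le
    linarith
  · have : (y - v * t₀ - k * (v * t)) / v ≤ t := by
      rw [div_le_iff₀ hv]
      linarith
    linarith
  · field_simp
    ring

theorem closed_curve_sweep_coverage_general (L v t : ℝ) (hv : 0 < v) (ht : 0 < t)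
    (n : ℕ) (hn : n = ⌈L / (v * t)⌉.toNat) :
    ∀ x ∈ Set.Ico (0 : ℝ) L, ∀ t₀ : ℝ, 0 ≤ t₀ →
      ∃ k < n, ∃ s ∈ Set.Icc t₀ (t₀ + t), rmod ((k : ℝ) * v * t + v * s) L = x := by
  intro x hx t₀ _
  have hL : 0 < L := hx.1.trans_lt hx.2
  obtain ⟨k, hk, s, hs, hks⟩ :=
    exists_sensor_reaches hv ht (toIcoMod_mem_Ico hL (v * t₀) x)
  refine ⟨k, by rwa [hn, Int.ceil_toNat], s, hs, ?_⟩
  rw [hks, rmod_toIcoMod, rmod_eq_self hx]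

/-- Deploying `n = ⌈L/(vt)⌉` sensors at positions `k·v·t mod L`, all moving in
the same direction at speed `v` on the closed curve (circle of circumference `L`),
guarantees that every point `x ∈ [0, L)` is visited in every time window `[t₀, t₀+t]`. -/
theorem closed_curve_sweep_coverage (L v t : ℝ) (hL : 0 < L) (hv : 0 < v) (ht : 0 < t)
    (n : ℕ) (hn : n = ⌈L / (v * t)⌉.toNat) :
    ∀ x ∈ Set.Ico (0 : ℝ) L, ∀ t₀ : ℝ, 0 ≤ t₀ →
      ∃ k < n, ∃ s ∈ Set.Icc t₀ (t₀ + t), rmod ((k : ℝ) * v * t + v * s) L = x :=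
  closed_curve_sweep_coverage_general L v t hv ht n hn
end

section
/- On the circle ℝ/Lℤ with L > 0, let a data mule move clockwise as f₁(s) = (a + v·s) mod L, another move counterclockwise as f₂(s) = (b − v·s) mod L, and let g : [0, t] → ℝ/Lℤ be any v-Lipschitz target trajectory. If at time 0 the target is at distance 0 along the circle from position p, f₁ reaches p within the clockwise arc of length at most vt ahead, and f₂ reaches p within the counterclockwise arc of length at most vt ahead, then at least one of f₁, f₂ meets g at some time s ∈ [0, t]. -/
/-- On the circle `ℝ/Lℤ` with `L ≥ 2vt`: a clockwise data mule starting `d₁`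
behind the target's initial position `p` (along the circle, `d₁ ≤ vt`) and a
counterclockwise data mule starting `d₂` ahead (`d₂ ≤ vt`) — here expressed via
lifts `f₁(s) = (p − d₁) + v·s` and `f₂(s) = (p + d₂) − v·s`, with positions
compared modulo `L` — together catch any target `g` moving with speed at most
`v` (a `v`-Lipschitz lift with `g 0 = p`) within time `t`. -/
theorem two_mules_meet_sensor (L v t p d₁ d₂ : ℝ) (hv : 0 < v) (ht : 0 < t)
    (hL : 2 * v * t ≤ L)
    (hd₁ : d₁ ∈ Set.Icc 0 (v * t)) (hd₂ : d₂ ∈ Set.Icc 0 (v * t))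
    (g : ℝ → ℝ) (hlip : LipschitzOnWith (Real.toNNReal v) g (Set.Icc 0 t))
    (hg0 : g 0 = p) :
    ∃ s ∈ Set.Icc (0 : ℝ) t,
      (∃ k : ℤ, (p - d₁) + v * s - g s = (k : ℝ) * L) ∨
      (∃ k : ℤ, (p + d₂) - v * s - g s = (k : ℝ) * L) := by
  obtain ⟨hd₁0, hd₁t⟩ := hd₁
  obtain ⟨hd₂0, hd₂t⟩ := hd₂
  have hgc : ContinuousOn g (Set.Icc 0 t) := hlip.continuousOn
  have h0mem : (0 : ℝ) ∈ Set.Icc 0 t := ⟨le_refl _, ht.le⟩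
  have htmem : t ∈ Set.Icc (0 : ℝ) t := ⟨ht.le, le_refl _⟩
  have hdist : dist (g t) (g 0) ≤ v * t := by
    have := hlip.dist_le_mul t htmem 0 h0mem
    rwa [Real.coe_toNNReal v hv.le, Real.dist_eq, Real.dist_eq, sub_zero, abs_of_pos ht] at this
  have hbound : |g t - p| ≤ v * t := by
    rw [← hg0]; rwa [Real.dist_eq] at hdist
  by_cases hc : (p - d₁) + v * t - g t ≥ 0
  · -- first mule catches g
    have hcont : ContinuousOn (fun s => (p - d₁) + v * s - g s) (Set.Icc 0 t) :=
      (continuousOn_const.add (continuousOn_const.mul continuousOn_id)).sub hgc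
    have hmem : (0 : ℝ) ∈ Set.Icc ((p - d₁) + v * 0 - g 0) ((p - d₁) + v * t - g t) := by
      constructor
      · rw [hg0]; linarith
      · exact hc
    obtain ⟨s, hs, hs0⟩ := intermediate_value_Icc ht.le hcont hmem
    exact ⟨s, hs, Or.inl ⟨0, by simp only [Int.cast_zero, zero_mul]; exact hs0⟩⟩
  · -- second mule catches g
    push_neg at hc
    have hcont : ContinuousOn (fun s => (p + d₂) - v * s - g s) (Set.Icc 0 t) :=
      (continuousOn_const.sub (continuousOn_const.mul continuousOn_id)).sub hgc
    have hmem : (0 : ℝ) ∈ Set.Icc ((p + d₂) - v * t - g t) ((p + d₂) - v * 0 - g 0) := by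
      constructor
      · linarith
      · rw [hg0]; linarith
    obtain ⟨s, hs, hs0⟩ := intermediate_value_Icc' ht.le hcont hmem
    exact ⟨s, hs, Or.inr ⟨0, by simp only [Int.cast_zero, zero_mul]; exact hs0⟩⟩
end
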